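/- arXiv:2208.08692 — 2 statements merged into one kernel-verified Lean document; each statement's English description precedes it below -/
import Mathlib

section
/- If a chord diagram τ of order n contains a chord diagram P of order k (as an induced sub-diagram on some set of k of its chords, up to rotation), then k + 1 − F(P) ≤ n + 1 − F(τ). In particular, if τ is realizable on the torus (n + 1 − F(τ) ≤ 2), then so is every diagram it contains. -/
/-- Strict cyclic betweenness on the cyclic group with `m` elements (`ZMod m`, realized as
`Fin m` so that the group is empty when `m = 0`): `b` lies on the open cyclic arc
from `a` to `c`. -/
def cyclicSbtw {m : ℕ} (a b c : Fin m) : Prop :=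
  0 < (b.val + (m - a.val)) % m ∧ (b.val + (m - a.val)) % m < (c.val + (m - a.val)) % m

/-- A chord diagram of order `n`: a fixed-point-free involution `τ` of the cyclic group
with `2n` elements (`ZMod (2n)`, realized as `Fin (2n)`); its chords are the pairs
`{i, τ i}`. -/
structure ChordDiagram (n : ℕ) where
  τ : Equiv.Perm (Fin (2 * n))
  invol : ∀ i, τ (τ i) = i
  fpf : ∀ i, τ i ≠ i

namespace ChordDiagram

/-- The boundary permutation `φ(i) = τ(i) + 1`. -/
def boundary {n : ℕ} (D : ChordDiagram n) : Equiv.Perm (Fin (2 * n)) :=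
  D.τ.trans (finRotate (2 * n))

/-- The number `F` of boundary components: the number of orbits of the boundary
permutation, with the convention `F = 1` when `n = 0`. -/
noncomputable def F {n : ℕ} (D : ChordDiagram n) : ℕ :=
  if n = 0 then 1
  else Nat.card (Quotient (MulAction.orbitRel (Subgroup.zpowers D.boundary) (Fin (2 * n))))

/-- Build a chord diagram from an involutive, fixed-point-free function. -/
def ofInvol {n : ℕ} (f : Fin (2 * n) → Fin (2 * n)) (h : Function.Involutive f)
    (hf : ∀ i, f i ≠ i) : ChordDiagram n :=
  ⟨Function.Involutive.toPerm f h, h, hf⟩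

/-- The empty chord diagram (order 0). -/
def emptyDiagram : ChordDiagram 0 := ⟨1, fun i => i.elim0, fun i => i.elim0⟩

/-- The chord diagram `(abab)`: chords `{0,2}, {1,3}` on `ZMod 4`. -/
def abab : ChordDiagram 2 := ofInvol ![2, 3, 0, 1] (by intro x; fin_cases x <;> rfl) (by decide)

/-- The chord diagram `(abcabc)`: chords `{0,3}, {1,4}, {2,5}` on `ZMod 6`. -/
def abcabc : ChordDiagram 3 :=
  ofInvol ![3, 4, 5, 0, 1, 2] (by intro x; fin_cases x <;> rfl) (by decide)

/-- The forbidden diagram `(ababcdcd)`: chords `{0,2},{1,3},{4,6},{5,7}` on `ZMod 8`. -/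
def ababcdcd : ChordDiagram 4 :=
  ofInvol ![2, 3, 0, 1, 6, 7, 4, 5] (by intro x; fin_cases x <;> rfl) (by decide)

/-- The forbidden diagram `(abcdabcd)`: chords `{0,4},{1,5},{2,6},{3,7}` on `ZMod 8`. -/
def abcdabcd : ChordDiagram 4 :=
  ofInvol ![4, 5, 6, 7, 0, 1, 2, 3] (by intro x; fin_cases x <;> rfl) (by decide)

/-- The forbidden diagram `(abacdcbd)`: chords `{0,2},{1,6},{3,5},{4,7}` on `ZMod 8`. -/
def abacdcbd : ChordDiagram 4 :=
  ofInvol ![2, 6, 0, 5, 7, 3, 1, 4] (by intro x; fin_cases x <;> rfl) (by decide)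

/-- The forbidden diagram `(abcadbdc)`: chords `{0,3},{1,5},{2,7},{4,6}` on `ZMod 8`. -/
def abcadbdc : ChordDiagram 4 :=
  ofInvol ![3, 5, 7, 0, 6, 1, 4, 2] (by intro x; fin_cases x <;> rfl) (by decide)

/-- The chords `{i, τ i}` and `{j, τ j}` interlace: exactly one of `j, τ j` lies on
the open cyclic arc from `i` to `τ i`. -/
def Interlaces {n : ℕ} (D : ChordDiagram n) (i j : Fin (2 * n)) : Prop :=
  Xor' (cyclicSbtw i j (D.τ i)) (cyclicSbtw i (D.τ j) (D.τ i))

/-- The type of chords of a chord diagram. -/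
def Chord {n : ℕ} (D : ChordDiagram n) : Type :=
  {p : Sym2 (Fin (2 * n)) // ∃ i, p = s(i, D.τ i)}

/-- The interlacement graph (graph of loops) of a chord diagram: vertices are the chords,
edges are the interlacing pairs of distinct chords. -/
def interGraph {n : ℕ} (D : ChordDiagram n) : SimpleGraph D.Chord where
  Adj c d := c ≠ d ∧
    ((∃ i j, c.1 = s(i, D.τ i) ∧ d.1 = s(j, D.τ j) ∧ D.Interlaces i j) ∨
     (∃ i j, d.1 = s(i, D.τ i) ∧ c.1 = s(j, D.τ j) ∧ D.Interlaces i j))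
  symm := by
    constructor
    intro c d h
    exact ⟨h.1.symm, h.2.symm⟩
  loopless := by
    constructor
    intro c h
    exact h.1 rfl

/-- A cyclic-order-preserving injection between cyclic groups. -/
def CycEmb {k m : ℕ} (f : Fin k → Fin m) : Prop :=
  Function.Injective f ∧ ∀ a b c, cyclicSbtw a b c → cyclicSbtw (f a) (f b) (f c)

/-- `D` contains the diagram `P`: the sub-diagram of `D` induced by some set of its chords
equals `P` up to rotation, i.e. there is a cyclic-order-preserving injection
`f : ZMod (2k) → ZMod (2n)` intertwining the involutions. -/
def Contains {n k : ℕ} (D : ChordDiagram n) (P : ChordDiagram k) : Prop :=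
  ∃ f : Fin (2 * k) → Fin (2 * n), CycEmb f ∧ ∀ i, D.τ (f i) = f (P.τ i)

/-- `D'` is obtained from `D` by deleting the chord `{j, τ j}` and renumbering the
remaining `2n` endpoints by the cyclic-order-preserving bijection onto `ZMod (2n)`. -/
def DeleteChord {n : ℕ} (D : ChordDiagram (n + 1)) (j : Fin (2 * (n + 1)))
    (D' : ChordDiagram n) : Prop :=
  ∃ f : Fin (2 * n) → Fin (2 * (n + 1)), CycEmb f ∧
    Set.range f = ({j, D.τ j} : Set (Fin (2 * (n + 1))))ᶜ ∧
    ∀ i, D.τ (f i) = f (D'.τ i)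

/-- Reduction operation (α): deletion of an isolated chord `{i, i+1}` (where `τ i = i + 1`). -/
def StepAlpha {n : ℕ} (D : ChordDiagram (n + 1)) (D' : ChordDiagram n) : Prop :=
  ∃ i, D.τ i = finRotate (2 * (n + 1)) i ∧ DeleteChord D i D'

/-- Reduction operation (β): deletion of the chord `{i+1, τ(i+1)}` from a parallel pair,
i.e. `τ(i+1) = τ(i) - 1` with the chords `{i, τ i}` and `{i+1, τ(i+1)}` distinct. -/
def StepBeta {n : ℕ} (D : ChordDiagram (n + 1)) (D' : ChordDiagram n) : Prop :=
  ∃ i, D.τ (finRotate (2 * (n + 1)) i) = (finRotate (2 * (n + 1))).symm (D.τ i) ∧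
    D.τ i ≠ finRotate (2 * (n + 1)) i ∧
    DeleteChord D (finRotate (2 * (n + 1)) i) D'

/-- One reduction step (operation (α) or (β)) between chord diagrams. -/
def Step (p q : Σ n, ChordDiagram n) : Prop :=
  ∃ h : p.1 = q.1 + 1,
    StepAlpha (cast (congrArg ChordDiagram h) p.2) q.2 ∨
    StepBeta (cast (congrArg ChordDiagram h) p.2) q.2

/-- `p` reduces to `q` by finitely many operations (α), (β) (possibly none). -/
def Reduces (p q : Σ n, ChordDiagram n) : Prop := Relation.ReflTransGen Step p q

/-- `D` reduces to one of the diagrams `()`, `(abab)`, `(abcabc)`. -/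
def ReducesToBasic {n : ℕ} (D : ChordDiagram n) : Prop :=
  Reduces ⟨n, D⟩ ⟨0, emptyDiagram⟩ ∨ Reduces ⟨n, D⟩ ⟨2, abab⟩ ∨ Reduces ⟨n, D⟩ ⟨3, abcabc⟩

end ChordDiagram

/-- A simple graph is a disjoint union of a (possibly empty) set of isolated vertices and a
complete bipartite or complete tripartite graph: there are three pairwise disjoint sets
`A`, `B`, `C` of vertices (a part may be empty; `C = ∅` gives the complete bipartite case)
such that two vertices are adjacent iff they lie in two different ones of these parts;
all remaining vertices are isolated. -/
def IsIsolatedPlusCompleteMultipartite {V : Type*} (G : SimpleGraph V) : Prop :=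
  ∃ A B C : Set V, Disjoint A B ∧ Disjoint A C ∧ Disjoint B C ∧
    ∀ v w, G.Adj v w ↔
      ((v ∈ A ∧ w ∈ B) ∨ (v ∈ B ∧ w ∈ A) ∨ (v ∈ A ∧ w ∈ C) ∨ (v ∈ C ∧ w ∈ A) ∨
       (v ∈ B ∧ w ∈ C) ∨ (v ∈ C ∧ w ∈ B))

/-! Let `R` be the set of endpoints of the chords of `D` forming the copy of `P`. Multiplying
the boundary permutation of `D` by the involution that exchanges the two endpoints of each of the
`n - k` chords outside `R` gives a permutation `σ` that acts as `x ↦ τ x + 1` on `R` and as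
`x ↦ x + 1` off `R`. Multiplying by a transposition changes the number of cycles by at most one,
so `F(D) ≤ c(σ) + (n - k)`. Starting at `τ x + 1` for `x ∈ R`, `σ` crosses the gap up to the
next point of `R`, so the embedding maps each cycle of the boundary permutation of `P` into a
cycle of `σ`; as every cycle of `σ` meets `R`, this gives `c(σ) ≤ F(P)`. -/

open MulAction Subgroup Equiv Perm Fin.NatCast Fin.CommRing

namespace Equiv.Perm

variable {α : Type*}

/-- Fixed points count as cycles, unlike in `Perm.cycleType`. -/
noncomputable def cycleCount (σ : Perm α) : ℕ :=
  Nat.card (Quotient (orbitRel (zpowers σ) α))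

theorem mk_orbitRel_zpowers_eq_iff {σ : Perm α} {x y : α} :
    Quotient.mk (orbitRel (zpowers σ) α) x = Quotient.mk _ y ↔ σ.SameCycle x y := by
  rw [Quotient.eq, orbitRel_apply, mem_orbit_iff, sameCycle_comm]
  constructor
  · rintro ⟨⟨g, hg⟩, rfl⟩
    obtain ⟨i, rfl⟩ := mem_zpowers_iff.mp hg
    exact ⟨i, rfl⟩
  · rintro ⟨i, rfl⟩
    exact ⟨⟨σ ^ i, zpow_mem_zpowers σ i⟩, rfl⟩

theorem card_range_le_cycleCount [Finite α] {β : Type*} {σ : Perm α} {g : α → β}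
    (hg : ∀ x, g (σ x) = g x) : Nat.card (Set.range g) ≤ σ.cycleCount := by
  have hconst : ∀ x y, σ.SameCycle x y → g x = g y := by
    intro x y hxy
    obtain ⟨i, rfl⟩ := hxy.exists_nat_pow_eq
    clear hxy
    induction i with
    | zero => rfl
    | succ i ih => rw [pow_succ', mul_apply, hg, ih]
  rw [← Set.range_quotient_lift (s := orbitRel (zpowers σ) α)
    fun x y hxy => hconst x y (mk_orbitRel_zpowers_eq_iff.mp (Quotient.sound hxy))]
  exact Finite.card_range_le _

theorem cycleCount_le_cycleCount_mul_swap_add_one [Finite α] [DecidableEq α] (σ : Perm α)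
    (a b : α) : σ.cycleCount ≤ (σ * swap a b).cycleCount + 1 := by
  classical
  set q := Quotient.mk (orbitRel (zpowers σ) α)
  have hq : ∀ {x y}, σ.SameCycle x y → q x = q y := mk_orbitRel_zpowers_eq_iff.mpr
  -- `g` merges the orbits of `a` and `b`, which `swap a b` glues together
  set g : α → Quotient (orbitRel (zpowers σ) α) := fun x => q (if σ.SameCycle x b then a else x)
  have hga : ∀ x, σ.SameCycle x a → g x = q a := fun x hx => by
    simp only [g]; split_ifs
    · rfl
    · exact hq hx
  have hgb : ∀ x, σ.SameCycle x b → g x = q a := fun x hx => by simp [g, hx]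
  have hg : ∀ x, g ((σ * swap a b) x) = g x := by
    intro x
    rw [mul_apply]
    rcases eq_or_ne x a with rfl | hxa
    · rw [swap_apply_left, hga _ SameCycle.rfl, hgb _ (sameCycle_apply_left.mpr SameCycle.rfl)]
    rcases eq_or_ne x b with rfl | hxb
    · rw [swap_apply_right, hga _ (sameCycle_apply_left.mpr SameCycle.rfl), hgb _ SameCycle.rfl]
    · rw [swap_apply_of_ne_of_ne hxa hxb]
      by_cases hx : σ.SameCycle x b
      · rw [hgb _ hx, hgb _ (sameCycle_apply_left.mpr hx)]
      · simp only [g, sameCycle_apply_left, if_neg hx]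
        exact hq (sameCycle_apply_left.mpr SameCycle.rfl)
  have hcover : Function.Surjective fun o : Option (Set.range g) => o.elim (q b) Subtype.val := by
    intro p
    induction p using Quotient.inductionOn with | h x => ?_
    by_cases hxb : σ.SameCycle x b
    · exact ⟨none, (hq hxb).symm⟩
    · exact ⟨some ⟨g x, x, rfl⟩, by simp [g, hxb, q]⟩
  calc σ.cycleCount ≤ Nat.card (Option (Set.range g)) := Nat.card_le_card_of_surjective _ hcover
    _ = Nat.card (Set.range g) + 1 := Finite.card_option
    _ ≤ (σ * swap a b).cycleCount + 1 := Nat.add_le_add_right (card_range_le_cycleCount hg) 1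

theorem two_mul_cycleCount_le_of_involutive [Fintype α] [DecidableEq α] (π : Perm α) {μ : Perm α}
    (hμ : Function.Involutive μ) :
    2 * π.cycleCount ≤ 2 * (π * μ).cycleCount + μ.support.card := by
  induction hN : μ.support.card using Nat.strong_induction_on generalizing μ with
  | _ N ih =>
  obtain hemp | ⟨a, ha⟩ := μ.support.eq_empty_or_nonempty
  · simp [support_eq_empty_iff.mp hemp]
  set s := swap a (μ a)
  have hcomm : μ * s = s * μ := by
    rw [mul_swap_eq_swap_mul, hμ a, swap_comm]
  have hμs : Function.Involutive (μ * s) := fun x => by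
    have h := DFunLike.congr_fun hcomm ((μ * s) x)
    simp only [mul_apply] at h ⊢
    rw [h, hμ, swap_apply_self]
  have hdisj : Disjoint (μ * s) s := by
    intro x
    rcases eq_or_ne x a with rfl | hxa
    · left; simp [s, hμ x]
    rcases eq_or_ne x (μ a) with rfl | hxb
    · left; simp [s]
    · right; exact swap_apply_of_ne_of_ne hxa hxb
  have hcard : (μ * s).support.card + 2 = N := by
    rw [← hN, ← card_support_swap (mem_support.mp ha).symm, ← hdisj.card_support_mul,
      mul_assoc, swap_mul_self, mul_one]
  have hstep := cycleCount_le_cycleCount_mul_swap_add_one (π * (μ * s)) a (μ a)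
  rw [mul_assoc, mul_assoc, swap_mul_self, mul_one] at hstep
  have := ih _ (by omega) hμs rfl
  omega

section CyclicWalk

variable {m : ℕ} [NeZero m]

theorem pow_apply_eq_add_of_forall_lt {σ : Perm (Fin m)} {y : Fin m} {t : ℕ}
    (h : ∀ s < t, σ (y + s) = y + s + 1) : (σ ^ t) y = y + t := by
  induction t with
  | zero => simp
  | succ t ih =>
    rw [pow_succ', mul_apply, ih fun s hs => h s (by omega), h t (by omega)]
    push_cast
    ring

theorem sameCycle_add_of_forall_lt {σ : Perm (Fin m)} {y : Fin m} {t : ℕ}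
    (h : ∀ s < t, σ (y + s) = y + s + 1) : σ.SameCycle y (y + t) :=
  ⟨t, by rw [zpow_natCast, pow_apply_eq_add_of_forall_lt h]⟩

theorem exists_sameCycle_mem {R : Set (Fin m)} (hR : R.Nonempty) {σ : Perm (Fin m)}
    (hσ : ∀ x ∉ R, σ x = x + 1) (y : Fin m) : ∃ z ∈ R, σ.SameCycle y z := by
  classical
  obtain ⟨z, hz⟩ := hR
  have hex : ∃ t : ℕ, y + (t : Fin m) ∈ R := ⟨(z - y).val, by simpa using hz⟩
  exact ⟨_, Nat.find_spec hex,
    sameCycle_add_of_forall_lt fun s hs => hσ _ (Nat.find_min hex hs)⟩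

theorem cycleCount_le_one_of_forall_apply_eq_add_one {σ : Perm (Fin m)} (hσ : ∀ x, σ x = x + 1) :
    σ.cycleCount ≤ 1 := by
  have hsub : Subsingleton (Quotient (orbitRel (zpowers σ) (Fin m))) := by
    refine ⟨fun p q => Quotient.inductionOn₂ p q fun x y => ?_⟩
    obtain ⟨_, rfl, hx⟩ := exists_sameCycle_mem (Set.singleton_nonempty 0) (fun x _ => hσ x) x
    obtain ⟨_, rfl, hy⟩ := exists_sameCycle_mem (Set.singleton_nonempty 0) (fun x _ => hσ x) y
    exact mk_orbitRel_zpowers_eq_iff.mpr (hx.trans hy.symm)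
  exact Finite.card_le_one_iff_subsingleton.mpr hsub

end CyclicWalk

end Equiv.Perm

theorem cyclicSbtw_iff {m : ℕ} (a b c : Fin m) :
    cyclicSbtw a b c ↔ 0 < (b - a).val ∧ (b - a).val < (c - a).val := by
  have hsub : ∀ x : Fin m, (x - a).val = (x.val + (m - a.val)) % m := fun x => by
    rw [Fin.sub_def]; simp [Nat.add_comm]
  rw [cyclicSbtw, hsub, hsub]

theorem cyclicSbtw_add_one {m : ℕ} [NeZero m] {x c : Fin m} (hcx : c ≠ x) (hcx1 : c ≠ x + 1) :
    cyclicSbtw x (x + 1) c := by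
  have hm : 1 < m := by
    by_contra! hm
    have : Subsingleton (Fin m) := Fin.subsingleton_iff_le_one.mpr hm
    exact hcx (Subsingleton.elim c x)
  have h0 : (c - x).val ≠ 0 := fun h => hcx (sub_eq_zero.mp (Fin.ext h))
  have h1 : (c - x).val ≠ 1 := fun h => hcx1 (by
    rw [← sub_eq_iff_eq_add']
    exact Fin.ext (by rw [h, Fin.val_one', Nat.mod_eq_of_lt hm]))
  rw [cyclicSbtw_iff, add_sub_cancel_left, Fin.val_one', Nat.mod_eq_of_lt hm]
  omega

namespace ChordDiagram

section CycEmb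

variable {k m : ℕ} {f : Fin k → Fin m}

theorem CycEmb.not_cyclicSbtw_finRotate (hf : CycEmb f) (x c : Fin k) :
    ¬ cyclicSbtw (f x) (f c) (f (finRotate k x)) := by
  have := x.neZero
  have := (f x).neZero
  rw [finRotate_apply]
  intro h
  have hcx : c ≠ x := by rintro rfl; simp [cyclicSbtw_iff] at h
  have hcx1 : c ≠ x + 1 := by rintro rfl; simp [cyclicSbtw_iff] at h
  have h' := hf.2 _ _ _ (cyclicSbtw_add_one hcx hcx1)
  rw [cyclicSbtw_iff] at h h'
  omega

theorem CycEmb.sameCycle_add_one [NeZero m] (hf : CycEmb f) (hk : 2 ≤ k) {σ : Perm (Fin m)}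
    (hσ : ∀ x ∉ Set.range f, σ x = x + 1) (x : Fin k) :
    σ.SameCycle (f x + 1) (f (finRotate k x)) := by
  set d := (f (finRotate k x) - f x).val with hd_def
  have hd : 0 < d := by
    refine Nat.pos_of_ne_zero fun h0 => ?_
    have hrot : finRotate k x ≠ x := mem_support.mp (by simp [support_finRotate_of_le hk])
    exact hrot (hf.1 (sub_eq_zero.mp (Fin.ext h0)))
  have hwalk : ∀ s < d - 1, σ (f x + 1 + s) = f x + 1 + s + 1 := by
    intro s hs
    have hval : (1 + (s : Fin m)).val = s + 1 := by
      rw [show 1 + (s : Fin m) = ((s + 1 : ℕ) : Fin m) by push_cast; ring]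
      exact Fin.val_cast_of_lt (by omega)
    refine hσ _ fun ⟨c, hc⟩ => hf.not_cyclicSbtw_finRotate x c ?_
    rw [hc, cyclicSbtw_iff, add_assoc, add_sub_cancel_left, hval, ← hd_def]
    omega
  have hend : f x + 1 + ((d - 1 : ℕ) : Fin m) = f (finRotate k x) := by
    rw [Nat.cast_sub hd, Nat.cast_one, add_assoc, add_sub_cancel, hd_def, Fin.cast_val_eq_self,
      add_sub_cancel]
  exact hend ▸ sameCycle_add_of_forall_lt hwalk

theorem CycEmb.cycleCount_le [NeZero m] (hf : CycEmb f) (hk : 2 ≤ k) {ρ : Perm (Fin k)}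
    {σ : Perm (Fin m)} (hσf : ∀ i, σ (f i) = f (ρ i) + 1)
    (hσ : ∀ x ∉ Set.range f, σ x = x + 1) :
    σ.cycleCount ≤ (finRotate k * ρ).cycleCount := by
  have : NeZero k := ⟨by omega⟩
  set q := Quotient.mk (orbitRel (zpowers σ) (Fin m))
  have hinv : ∀ i, (q ∘ f) ((finRotate k * ρ) i) = (q ∘ f) i := fun i => by
    refine mk_orbitRel_zpowers_eq_iff.mpr (hf.sameCycle_add_one hk hσ (ρ i)).symm |>.trans ?_
    rw [← hσf]
    exact mk_orbitRel_zpowers_eq_iff.mpr (sameCycle_apply_left.mpr .rfl)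
  have hsurj : Function.Surjective (q ∘ f) := by
    rintro ⟨y⟩
    obtain ⟨_, ⟨i, rfl⟩, hy⟩ := exists_sameCycle_mem (Set.range_nonempty f) hσ y
    exact ⟨i, mk_orbitRel_zpowers_eq_iff.mpr hy.symm⟩
  calc σ.cycleCount = Nat.card (Set.range (q ∘ f)) := by rw [hsurj.range_eq, Nat.card_univ]; rfl
    _ ≤ _ := card_range_le_cycleCount hinv

end CycEmb

variable {n k : ℕ}

theorem F_eq_cycleCount (D : ChordDiagram n) (hn : n ≠ 0) : D.F = D.boundary.cycleCount := by
  rw [F, if_neg hn]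
  rfl

open Classical in
noncomputable def fixOn (D : ChordDiagram n) (R : Set (Fin (2 * n))) (x : Fin (2 * n)) :
    Fin (2 * n) :=
  if x ∈ R then x else D.τ x

theorem involutive_fixOn (D : ChordDiagram n) {R : Set (Fin (2 * n))}
    (hR : ∀ x ∈ R, D.τ x ∈ R) : Function.Involutive (D.fixOn R) := fun x => by
  by_cases hx : x ∈ R
  · simp [fixOn, hx]
  · have hτx : D.τ x ∉ R := fun h => hx (D.invol x ▸ hR _ h)
    simp [fixOn, hx, hτx, D.invol]

theorem Contains.F_add_le {D : ChordDiagram n} {P : ChordDiagram k} (h : D.Contains P) :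
    D.F + k ≤ P.F + n := by
  obtain ⟨f, hf, hcomm⟩ := h
  have hkn : 2 * k ≤ 2 * n := by simpa using Fintype.card_le_of_injective f hf.1
  rcases Nat.eq_zero_or_pos n with rfl | hn
  · obtain rfl : k = 0 := by omega
    simp [F]
  have : NeZero (2 * n) := ⟨by omega⟩
  have hR : ∀ x ∈ Set.range f, D.τ x ∈ Set.range f := by
    rintro _ ⟨i, rfl⟩
    exact ⟨P.τ i, (hcomm i).symm⟩
  set μ := (D.involutive_fixOn hR).toPerm
  set σ := D.boundary * μ
  have hσR : ∀ x ∈ Set.range f, σ x = D.τ x + 1 := fun x hx => by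
    simp [σ, μ, fixOn, hx, boundary]
  have hσ : ∀ x ∉ Set.range f, σ x = x + 1 := fun x hx => by
    simp [σ, μ, fixOn, hx, boundary, D.invol]
  have hsupp : μ.support.card ≤ 2 * n - 2 * k := by
    have hsub : μ.support ⊆ (Finset.univ.image f)ᶜ := fun x hx => by
      refine Finset.mem_compl.mpr fun hxf => mem_support.mp hx ?_
      obtain ⟨i, -, rfl⟩ := Finset.mem_image.mp hxf
      simp [μ, fixOn]
    simpa [Finset.card_compl, Finset.card_image_of_injective _ hf.1] using Finset.card_le_card hsub
  have hσP : σ.cycleCount ≤ P.F := by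
    rcases Nat.eq_zero_or_pos k with rfl | hk
    · rw [F, if_pos rfl]
      exact cycleCount_le_one_of_forall_apply_eq_add_one fun x => hσ x fun ⟨i, _⟩ => i.elim0
    · rw [F_eq_cycleCount P hk.ne']
      exact hf.cycleCount_le (by omega) (fun i => by rw [hσR _ ⟨i, rfl⟩, hcomm]) hσ
  have hD : 2 * D.boundary.cycleCount ≤ 2 * σ.cycleCount + μ.support.card :=
    two_mul_cycleCount_le_of_involutive D.boundary (D.involutive_fixOn hR)
  rw [F_eq_cycleCount D hn.ne']
  omega

end ChordDiagram

/-- If a chord diagram `D` of order `n` contains a chord diagram `P` of order `k` (as an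
induced sub-diagram on some set of its chords, up to rotation), then
`k + 1 - F(P) ≤ n + 1 - F(D)`. In particular, if `D` is realizable on the torus
(`n + 1 - F(D) ≤ 2`), then so is every diagram it contains. -/
theorem contains_genus_mono (n k : ℕ) (D : ChordDiagram n) (P : ChordDiagram k)
    (h : D.Contains P) :
    (k : ℤ) + 1 - (P.F : ℤ) ≤ (n : ℤ) + 1 - (D.F : ℤ) ∧
    ((n : ℤ) + 1 - (D.F : ℤ) ≤ 2 → (k : ℤ) + 1 - (P.F : ℤ) ≤ 2) := by
  have := h.F_add_le
  omega
end

section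
/- Let τ be a chord diagram of order n ≥ 2 and let τ' (of order n − 1) be obtained from τ by reduction operation (β), i.e. by deleting the chord {i+1, τ(i+1)} from a parallel pair (τ(i + 1) = τ(i) − 1 with the two chords distinct) and renumbering. Then F(τ') = F(τ) − 1, and hence (n − 1) + 1 − F(τ') = n + 1 − F(τ); in particular operation (β) preserves realizability on the torus. -/
/-!
Let `φ = τ + 1` be the boundary permutation of `D`, with parallel chords `{i, x}` and `{j, y}`,
`j = i + 1`, `x = y + 1`, of which `{j, y}` is deleted. Transporting the boundary permutation of
`D'` along the renumbering and extending it by the identity on `j` and `y` gives a permutation `ψ`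
with two more orbits than `D'`. Since the renumbering preserves the cyclic order, `ψ z` is the
first surviving endpoint after `τ z`; so on the surviving endpoints `ψ` agrees with `φ` except at
`x` and at the endpoint `a` whose partner immediately precedes `y`, and `φ = ψ (x y) (x a) (x j)`.
The first transposition merges the fixed point `y` into a cycle, the second splits `x` off as a
fixed point (when `a = y` they cancel) and the third merges `x` with the fixed point `j`. Hence `φ`
has one orbit fewer than `ψ`, i.e. one more than the boundary permutation of `D'`.
-/

open Equiv Equiv.Perm

namespace Equiv.Perm

variable {α β γ : Type*}

noncomputable def numOrbits (σ : Perm α) : ℕ := Nat.card (Quotient (SameCycle.setoid σ))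

theorem orbitRel_zpowers_eq (σ : Perm α) :
    MulAction.orbitRel (Subgroup.zpowers σ) α = SameCycle.setoid σ := by
  ext x y
  rw [MulAction.orbitRel_apply, MulAction.mem_orbit_iff]
  constructor
  · rintro ⟨⟨g, hg⟩, rfl⟩
    obtain ⟨k, rfl⟩ := Subgroup.mem_zpowers_iff.mp hg
    exact ⟨-k, by simp⟩
  · intro h
    obtain ⟨k, hk⟩ := h.symm
    exact ⟨⟨σ ^ k, k, rfl⟩, hk⟩

theorem SameCycle.eq_of_invariant {σ : Perm α} {P : α → γ} (hP : ∀ z, P (σ z) = P z)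
    {x y : α} (h : SameCycle σ x y) : P x = P y := by
  obtain ⟨k, rfl⟩ := h
  induction k using Int.induction_on with
  | zero => rfl
  | succ k ih => rw [ih, add_comm, zpow_add, zpow_one, mul_apply, hP]
  | pred k ih => rw [ih, sub_eq_neg_add, zpow_add, zpow_neg_one, mul_apply, ← hP (σ⁻¹ _),
      coe_inv, apply_symm_apply]

theorem numOrbits_extendDomain [Finite β] {p : β → Prop} [DecidablePred p]
    (σ : Perm α) (e : α ≃ Subtype p) :
    (σ.extendDomain e).numOrbits = σ.numOrbits + Nat.card {b // ¬ p b} := by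
  have : Finite α := .of_injective _ (Subtype.val_injective.comp e.injective)
  have hfix : ∀ b : {b // ¬ p b}, σ.extendDomain e b = b :=
    fun b => extendDomain_apply_not_subtype _ _ b.2
  let g : Quotient (SameCycle.setoid σ) ⊕ {b // ¬ p b} →
      Quotient (SameCycle.setoid (σ.extendDomain e)) :=
    Sum.elim (Quotient.map (fun x => (e x : β)) fun _ _ => SameCycle.extendDomain)
      fun b => ⟦b⟧
  have hg : Function.Bijective g := by
    refine ⟨?_, fun q => ?_⟩
    · refine Function.Injective.sumElim ?_ ?_ ?_
      · refine Quotient.ind₂ fun x y h => Quotient.sound ?_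
        rw [Quotient.map_mk, Quotient.map_mk] at h
        exact sameCycle_extendDomain.1 (Quotient.exact h)
      · exact fun b b' h => Subtype.ext ((Quotient.exact h).eq_of_left (hfix b))
      · refine Quotient.ind fun x b h => b.2 ?_
        rw [Quotient.map_mk] at h
        exact (Quotient.exact h).symm.eq_of_left (hfix b) ▸ (e x).2
    · induction q using Quotient.inductionOn with | h z => ?_
      by_cases hz : p z
      · exact ⟨.inl ⟦e.symm ⟨z, hz⟩⟧, by simp [g]⟩
      · exact ⟨.inr ⟨z, hz⟩, rfl⟩
  rw [numOrbits, numOrbits, ← Nat.card_eq_of_bijective g hg, Nat.card_sum]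

section MulSwap

variable [DecidableEq α] {σ : Perm α} {a b : α}

theorem SameCycle.mul_swap (hb : σ b = b) {x y : α} (h : SameCycle σ x y) :
    SameCycle (σ * swap a b) x y := by
  refine (h.eq_of_invariant (P := fun z => SameCycle (σ * swap a b) x z) fun z => ?_).mp
    (.refl _ _)
  simp only [eq_iff_iff]
  by_cases hza : z = a
  · have hab := sameCycle_apply_right (f := σ * swap a b) (x := x) (y := b)
    have hba := sameCycle_apply_right (f := σ * swap a b) (x := x) (y := a)
    rw [mul_apply, swap_apply_right] at hab
    rw [mul_apply, swap_apply_left, hb] at hba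
    rw [hza]
    exact hab.trans hba
  by_cases hzb : z = b
  · rw [hzb, hb]
  · rw [show σ z = (σ * swap a b) z by simp [swap_apply_of_ne_of_ne hza hzb],
      sameCycle_apply_right]

-- Along a `σ * swap a b`-path, renaming `b` to `a` gives a `σ`-path.
theorem SameCycle.of_mul_swap (hb : σ b = b) (hab : a ≠ b) {x y : α}
    (h : SameCycle (σ * swap a b) x y) (hx : x ≠ b) (hy : y ≠ b) : SameCycle σ x y := by
  let r : α → α := fun z => if z = b then a else z
  have hσ : ∀ z, z ≠ b → σ z ≠ b := fun z hz h => hz (σ.injective (h.trans hb.symm))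
  have := h.eq_of_invariant (P := fun z => SameCycle σ x (r z)) fun z => by
    simp only [eq_iff_iff, r]
    by_cases hzb : z = b
    · rw [hzb, mul_apply, swap_apply_right, if_neg (hσ a hab), if_pos (Eq.refl b),
        sameCycle_apply_right]
    by_cases hza : z = a
    · rw [hza, mul_apply, swap_apply_left, hb, if_pos (Eq.refl b), if_neg hab]
    · rw [mul_apply, swap_apply_of_ne_of_ne hza hzb, if_neg (hσ z hzb), if_neg hzb,
        sameCycle_apply_right]
  simp only [r, if_neg hx, if_neg hy, eq_iff_iff] at this
  exact this.mp (.refl _ _)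

theorem numOrbits_mul_swap_add_one [Finite α] (hb : σ b = b) (hab : a ≠ b) :
    (σ * swap a b).numOrbits + 1 = σ.numOrbits := by
  let r : α → α := fun z => if z = b then a else z
  have hr : ∀ x, SameCycle (σ * swap a b) x (r x) := fun x => by
    by_cases hx : x = b
    · simp only [r, hx, if_pos]
      exact ⟨-1, by rw [zpow_neg_one, inv_eq_iff_eq, mul_apply, swap_apply_left, hb]⟩
    · simp only [r, if_neg hx, SameCycle.refl]
  have hr_ne : ∀ x, r x ≠ b := fun x => by
    by_cases hx : x = b <;> simp [r, hx, hab]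
  let g : Quotient (SameCycle.setoid (σ * swap a b)) ⊕ Unit → Quotient (SameCycle.setoid σ) :=
    Sum.elim (Quotient.map r fun x y h => ((hr x).symm.trans (h.trans (hr y))).of_mul_swap hb hab
      (hr_ne x) (hr_ne y)) fun _ => ⟦b⟧
  have hg : Function.Bijective g := by
    refine ⟨Function.Injective.sumElim ?_ (fun _ _ _ => rfl) ?_, fun q => ?_⟩
    · refine Quotient.ind₂ fun x y h => Quotient.sound ?_
      rw [Quotient.map_mk, Quotient.map_mk] at h
      exact (hr x).trans (((Quotient.exact h).mul_swap hb).trans (hr y).symm)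
    · refine Quotient.ind fun x _ h => hr_ne x ?_
      rw [Quotient.map_mk] at h
      exact ((Quotient.exact h).symm.eq_of_left hb).symm
    · induction q using Quotient.inductionOn with | h z => ?_
      by_cases hz : z = b
      · exact ⟨.inr (), by simp [g, hz]⟩
      · exact ⟨.inl ⟦z⟧, by simp [g, r, hz]⟩
  rw [numOrbits, numOrbits, ← Nat.card_eq_of_bijective g hg, Nat.card_sum,
    Nat.card_unique (α := Unit)]

end MulSwap

end Equiv.Perm

section CyclicOrder

variable {m : ℕ}

theorem Fin.add_one_ne_self [NeZero m] (hm : 2 ≤ m) (a : Fin m) : a + 1 ≠ a := by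
  rw [Ne, add_eq_left, Fin.ext_iff, Fin.val_one', Fin.val_zero, Nat.mod_eq_of_lt hm]
  exact one_ne_zero

theorem Fin.add_one_add_one_ne_self [NeZero m] (hm : 3 ≤ m) (a : Fin m) : a + 1 + 1 ≠ a := by
  rw [Ne, add_assoc, add_eq_left, Fin.ext_iff, Fin.val_add, Fin.val_one', Fin.val_zero,
    Nat.mod_eq_of_lt (by omega : 1 < m), Nat.mod_eq_of_lt (by omega : 1 + 1 < m)]
  exact two_ne_zero

theorem cyclicSbtw_iff_val_sub {a b c : Fin m} :
    cyclicSbtw a b c ↔ 0 < (b - a).val ∧ (b - a).val < (c - a).val := by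
  simp only [cyclicSbtw, Fin.sub_def, Nat.add_comm]

theorem Fin.val_sub_pos_iff [NeZero m] {a b : Fin m} : 0 < (b - a).val ↔ b ≠ a := by
  rw [Nat.pos_iff_ne_zero, Ne, Fin.val_eq_zero_iff, sub_eq_zero]

theorem Fin.val_sub_inj [NeZero m] {a b c : Fin m} : (b - a).val = (c - a).val ↔ b = c := by
  rw [Fin.val_inj, sub_left_inj]

theorem cyclicSbtw.ne_left [NeZero m] {a b c : Fin m} (h : cyclicSbtw a b c) : b ≠ a :=
  Fin.val_sub_pos_iff.1 (cyclicSbtw_iff_val_sub.1 h).1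

theorem not_cyclicSbtw_self_right {a b : Fin m} : ¬ cyclicSbtw a b a := by
  rw [cyclicSbtw, Nat.add_sub_cancel' a.isLt.le, Nat.mod_self]
  omega

theorem cyclicSbtw_or_cyclicSbtw [NeZero m] {a b c : Fin m} (hab : a ≠ b) (hac : a ≠ c)
    (hbc : b ≠ c) : cyclicSbtw a b c ∨ cyclicSbtw a c b := by
  have hb := Fin.val_sub_pos_iff.2 hab.symm
  have hc := Fin.val_sub_pos_iff.2 hac.symm
  have hbc' := mt (Fin.val_sub_inj (a := a)).1 hbc
  simp only [cyclicSbtw_iff_val_sub]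
  omega

theorem cyclicSbtw.of_add_one [NeZero m] {a b c : Fin m} (h : cyclicSbtw a b (c + 1)) :
    cyclicSbtw a b c ∨ b = c := by
  by_cases hc : c + 1 = a
  · exact absurd h (hc ▸ not_cyclicSbtw_self_right)
  obtain ⟨k, rfl⟩ := Nat.exists_eq_succ_of_ne_zero (NeZero.ne m)
  have hv : (c + 1 - a).val = (c - a).val + 1 := by
    rw [add_sub_right_comm, Fin.val_add_one, if_neg]
    rintro hl
    exact hc (by rw [← sub_eq_zero, add_sub_right_comm, hl, Fin.last_add_one])
  rw [cyclicSbtw_iff_val_sub, hv] at h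
  rw [cyclicSbtw_iff_val_sub, ← Fin.val_sub_inj (a := a)]
  omega

theorem not_cyclicSbtw_add_one [NeZero m] {a b : Fin m} : ¬ cyclicSbtw a b (a + 1) := fun h =>
  h.of_add_one.elim not_cyclicSbtw_self_right h.ne_left

theorem cyclicSbtw.eq_of_add_two [NeZero m] {a b : Fin m} (h : cyclicSbtw a b (a + 1 + 1)) :
    b = a + 1 :=
  h.of_add_one.resolve_left not_cyclicSbtw_add_one

theorem cyclicSbtw.eq_or_eq_of_add_three [NeZero m] {a b : Fin m}
    (h : cyclicSbtw a b (a + 1 + 1 + 1)) : b = a + 1 ∨ b = a + 1 + 1 :=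
  h.of_add_one.imp_left cyclicSbtw.eq_of_add_two

theorem ChordDiagram.CycEmb.add_one_eq {k : ℕ} [NeZero k] {f : Fin k → Fin m}
    (hf : ChordDiagram.CycEmb f) (hk : 2 ≤ k) {j l : Fin k} (hjl : j ≠ l)
    (hgap : ∀ w, ¬ cyclicSbtw (f j) (f w) (f l)) : j + 1 = l := by
  have : NeZero m := (f j).neZero
  by_contra hne
  rcases cyclicSbtw_or_cyclicSbtw (Fin.add_one_ne_self hk j).symm hjl hne with h | h
  · exact hgap _ (hf.2 _ _ _ h)
  · exact not_cyclicSbtw_add_one h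

end CyclicOrder

namespace ChordDiagram

theorem F_eq_numOrbits {n : ℕ} (D : ChordDiagram (n + 1)) : D.F = D.boundary.numOrbits := by
  rw [F, if_neg n.succ_ne_zero, orbitRel_zpowers_eq]
  rfl

theorem boundary_apply {n : ℕ} [NeZero (2 * n)] (D : ChordDiagram n) (z : Fin (2 * n)) :
    D.boundary z = D.τ z + 1 :=
  finRotate_apply _

/-- `DeleteChord D j D'` unfolds to `∃ f, IsRenumbering D j D' f`. -/
def IsRenumbering {n : ℕ} (D : ChordDiagram (n + 1)) (j : Fin (2 * (n + 1)))
    (D' : ChordDiagram n) (f : Fin (2 * n) → Fin (2 * (n + 1))) : Prop :=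
  CycEmb f ∧ Set.range f = ({j, D.τ j} : Set (Fin (2 * (n + 1))))ᶜ ∧
    ∀ k, D.τ (f k) = f (D'.τ k)

namespace IsRenumbering

variable {n : ℕ} {D : ChordDiagram (n + 1)} {j : Fin (2 * (n + 1))} {D' : ChordDiagram n}
  {f : Fin (2 * n) → Fin (2 * (n + 1))}

theorem mem_range (hf : IsRenumbering D j D' f) {z : Fin (2 * (n + 1))} :
    z ∈ Set.range f ↔ z ≠ j ∧ z ≠ D.τ j := by
  simp [hf.2.1, not_or]

noncomputable def extendedBoundary (hf : IsRenumbering D j D' f) : Perm (Fin (2 * (n + 1))) :=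
  D'.boundary.extendDomain (Equiv.ofInjective f hf.1.1)

theorem numOrbits_extendedBoundary (hf : IsRenumbering D j D' f) :
    hf.extendedBoundary.numOrbits = D'.boundary.numOrbits + 2 := by
  rw [extendedBoundary, numOrbits_extendDomain]
  change _ + Nat.card ↥(Set.range f)ᶜ = _
  rw [hf.2.1, compl_compl, Nat.card_coe_set_eq, Set.ncard_pair (D.fpf j).symm]

theorem extendedBoundary_apply_of_notMem (hf : IsRenumbering D j D' f) {z : Fin (2 * (n + 1))}
    (hz : z ∉ Set.range f) : hf.extendedBoundary z = z :=
  extendDomain_apply_not_subtype _ _ hz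

theorem extendedBoundary_apply (hf : IsRenumbering D j D' f) {w z : Fin (2 * (n + 1))}
    (hw : w ∈ Set.range f) (hz : z ∈ Set.range f) (hzw : z ≠ D.τ w)
    (hgap : ∀ v, cyclicSbtw (D.τ w) v z → v ∉ Set.range f) : hf.extendedBoundary w = z := by
  obtain ⟨k, rfl⟩ := hw
  obtain ⟨l, rfl⟩ := hz
  have : NeZero (2 * n) := k.neZero
  have hτk : l ≠ D'.τ k := fun h => hzw (by rw [h, hf.2.2])
  have hnext : D'.τ k + 1 = l := hf.1.add_one_eq (by have := k.pos; omega) hτk.symm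
    fun w hw => hgap _ (by rwa [hf.2.2]) ⟨w, rfl⟩
  refine (extendDomain_apply_image _ (Equiv.ofInjective f hf.1.1) k).trans ?_
  rw [Equiv.ofInjective_apply, boundary_apply, hnext]

theorem extendedBoundary_apply_eq_boundary (hf : IsRenumbering D j D' f)
    {w : Fin (2 * (n + 1))} (hw : w ∈ Set.range f) (hφw : D.boundary w ∈ Set.range f) :
    hf.extendedBoundary w = D.boundary w := by
  rw [boundary_apply] at *
  exact hf.extendedBoundary_apply hw hφw (Fin.add_one_ne_self (by omega) _)
    fun v h => absurd h not_cyclicSbtw_add_one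

end IsRenumbering

/-- The parallel chords `{i, x}` and `{j, y}` of operation (β), together with the chord `{c, a}`
whose endpoint `c` immediately precedes `y`. -/
structure IsParallelPair {n : ℕ} (D : ChordDiagram (n + 2)) (i j x y c a : Fin (2 * (n + 2))) :
    Prop where
  add_one_i : i + 1 = j
  τ_i : D.τ i = x
  τ_j : D.τ j = y
  τ_c : D.τ c = a
  add_one_y : y + 1 = x
  add_one_c : c + 1 = y
  x_ne_j : x ≠ j

namespace IsParallelPair

variable {n : ℕ} {D : ChordDiagram (n + 2)} {D' : ChordDiagram (n + 1)}
  {f : Fin (2 * (n + 1)) → Fin (2 * (n + 2))} {i j x y c a : Fin (2 * (n + 2))}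

theorem τ_x (hp : D.IsParallelPair i j x y c a) : D.τ x = i := hp.τ_i ▸ D.invol i

theorem τ_y (hp : D.IsParallelPair i j x y c a) : D.τ y = j := hp.τ_j ▸ D.invol j

theorem τ_a (hp : D.IsParallelPair i j x y c a) : D.τ a = c := hp.τ_c ▸ D.invol c

theorem x_ne_y (hp : D.IsParallelPair i j x y c a) : x ≠ y :=
  hp.add_one_y ▸ Fin.add_one_ne_self (by omega) y

theorem j_ne_y (hp : D.IsParallelPair i j x y c a) : j ≠ y := hp.τ_j ▸ (D.fpf j).symm

theorem a_ne_x (hp : D.IsParallelPair i j x y c a) : a ≠ x := fun h =>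
  hp.j_ne_y (by rw [← hp.add_one_i, ← hp.add_one_c, ← hp.τ_a, h, hp.τ_x])

theorem a_ne_j (hp : D.IsParallelPair i j x y c a) : a ≠ j := fun h =>
  Fin.add_one_ne_self (by omega) y (by have := hp.add_one_c; rwa [← hp.τ_a, h, hp.τ_j] at this)

theorem boundary_x (hp : D.IsParallelPair i j x y c a) : D.boundary x = j := by
  rw [boundary_apply, hp.τ_x, hp.add_one_i]

theorem boundary_j (hp : D.IsParallelPair i j x y c a) : D.boundary j = x := by
  rw [boundary_apply, hp.τ_j, hp.add_one_y]

theorem boundary_a (hp : D.IsParallelPair i j x y c a) : D.boundary a = y := by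
  rw [boundary_apply, hp.τ_a, hp.add_one_c]

theorem mem_range (hp : D.IsParallelPair i j x y c a) (hf : IsRenumbering D j D' f)
    {z : Fin (2 * (n + 2))} : z ∈ Set.range f ↔ z ≠ j ∧ z ≠ y :=
  hp.τ_j ▸ hf.mem_range

theorem extendedBoundary_apply_of_ne (hp : D.IsParallelPair i j x y c a)
    (hf : IsRenumbering D j D' f) {z : Fin (2 * (n + 2))} (hzx : z ≠ x) (hza : z ≠ a)
    (hzj : z ≠ j) (hzy : z ≠ y) : hf.extendedBoundary z = D.boundary z := by
  refine hf.extendedBoundary_apply_eq_boundary (hp.mem_range hf |>.2 ⟨hzj, hzy⟩)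
    (hp.mem_range hf |>.2 ⟨?_, ?_⟩)
  · rw [boundary_apply, ← hp.add_one_i]
    exact fun h => hzx (by rw [← hp.τ_i, ← add_right_cancel h, D.invol])
  · rw [boundary_apply, ← hp.add_one_c]
    exact fun h => hza (by rw [← hp.τ_c, ← add_right_cancel h, D.invol])

theorem extendedBoundary_x_of_a_eq_y (hp : D.IsParallelPair i j x y c a)
    (hf : IsRenumbering D j D' f) (hay : a = y) : hf.extendedBoundary x = x := by
  have hcj : c = j := by rw [← hp.τ_a, hay, hp.τ_y]
  have hx := (hp.mem_range hf).2 ⟨hp.x_ne_j, hp.x_ne_y⟩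
  refine hf.extendedBoundary_apply hx hx (by rw [hp.τ_x, ← hp.τ_i]; exact D.fpf i)
    fun v hv => ?_
  rw [hp.τ_x, ← hp.add_one_y, ← hp.add_one_c, hcj, ← hp.add_one_i] at hv
  have hv' := hv.eq_or_eq_of_add_three
  rw [hp.add_one_i, ← hcj, hp.add_one_c, hcj] at hv'
  rcases hv' with h | h <;> simp [hp.mem_range hf, h]

theorem extendedBoundary_x_of_a_ne_y (hp : D.IsParallelPair i j x y c a)
    (hf : IsRenumbering D j D' f) (hay : a ≠ y) : hf.extendedBoundary x = j + 1 := by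
  refine hf.extendedBoundary_apply ((hp.mem_range hf).2 ⟨hp.x_ne_j, hp.x_ne_y⟩)
    ((hp.mem_range hf).2 ⟨Fin.add_one_ne_self (by omega) j, fun h => hay ?_⟩) ?_ fun v hv => ?_
  · rw [← hp.τ_c, add_right_cancel (hp.add_one_c.trans h.symm), hp.τ_j]
  · rw [hp.τ_x, ← hp.add_one_i]
    exact Fin.add_one_add_one_ne_self (by omega) i
  · rw [hp.τ_x, ← hp.add_one_i] at hv
    simp [hv.eq_of_add_two, hp.add_one_i, hp.mem_range hf]

theorem extendedBoundary_a_of_a_ne_y (hp : D.IsParallelPair i j x y c a)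
    (hf : IsRenumbering D j D' f) (hay : a ≠ y) : hf.extendedBoundary a = x := by
  refine hf.extendedBoundary_apply ((hp.mem_range hf).2 ⟨hp.a_ne_j, hay⟩)
    ((hp.mem_range hf).2 ⟨hp.x_ne_j, hp.x_ne_y⟩) ?_ fun v hv => ?_
  · rw [hp.τ_a, ← hp.add_one_y, ← hp.add_one_c]
    exact Fin.add_one_add_one_ne_self (by omega) c
  · rw [hp.τ_a, ← hp.add_one_y, ← hp.add_one_c] at hv
    simp [hv.eq_of_add_two, hp.add_one_c, hp.mem_range hf]

theorem extendedBoundary_swap_x_y_a (hp : D.IsParallelPair i j x y c a)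
    (hf : IsRenumbering D j D' f) : hf.extendedBoundary (swap x y a) = x := by
  rcases eq_or_ne a y with hay | hay
  · rw [hay, swap_apply_right, hp.extendedBoundary_x_of_a_eq_y hf hay]
  · rw [swap_apply_of_ne_of_ne hp.a_ne_x hay, hp.extendedBoundary_a_of_a_ne_y hf hay]

theorem extendedBoundary_j (hp : D.IsParallelPair i j x y c a) (hf : IsRenumbering D j D' f) :
    hf.extendedBoundary j = j :=
  hf.extendedBoundary_apply_of_notMem (by simp [hp.mem_range hf])

theorem extendedBoundary_y (hp : D.IsParallelPair i j x y c a) (hf : IsRenumbering D j D' f) :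
    hf.extendedBoundary y = y :=
  hf.extendedBoundary_apply_of_notMem (by simp [hp.mem_range hf])

theorem boundary_eq_mul_swap_of_a_eq_y (hp : D.IsParallelPair i j x y c a)
    (hf : IsRenumbering D j D' f) (hay : a = y) : D.boundary = hf.extendedBoundary * swap x j := by
  ext z : 1
  rw [mul_apply]
  by_cases hzx : z = x
  · rw [hzx, hp.boundary_x, swap_apply_left, hp.extendedBoundary_j hf]
  by_cases hzj : z = j
  · rw [hzj, hp.boundary_j, swap_apply_right, hp.extendedBoundary_x_of_a_eq_y hf hay]
  by_cases hzy : z = y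
  · have hcj : c = j := by rw [← hp.τ_a, hay, hp.τ_y]
    rw [hzy, swap_apply_of_ne_of_ne hp.x_ne_y.symm hp.j_ne_y.symm, hp.extendedBoundary_y hf,
      boundary_apply, hp.τ_y, ← hcj, hp.add_one_c]
  · rw [swap_apply_of_ne_of_ne hzx hzj,
      hp.extendedBoundary_apply_of_ne hf hzx (hay ▸ hzy) hzj hzy]

theorem boundary_eq_mul_swaps_of_a_ne_y (hp : D.IsParallelPair i j x y c a)
    (hf : IsRenumbering D j D' f) (hay : a ≠ y) :
    D.boundary = hf.extendedBoundary * swap x y * swap x a * swap x j := by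
  ext z : 1
  simp only [mul_apply]
  by_cases hzx : z = x
  · rw [hzx, hp.boundary_x, swap_apply_left,
      swap_apply_of_ne_of_ne hp.x_ne_j.symm hp.a_ne_j.symm,
      swap_apply_of_ne_of_ne hp.x_ne_j.symm hp.j_ne_y, hp.extendedBoundary_j hf]
  by_cases hzj : z = j
  · rw [hzj, hp.boundary_j, swap_apply_right, swap_apply_left,
      swap_apply_of_ne_of_ne hp.a_ne_x hay, hp.extendedBoundary_a_of_a_ne_y hf hay]
  by_cases hza : z = a
  · rw [hza, hp.boundary_a, swap_apply_of_ne_of_ne hp.a_ne_x hp.a_ne_j, swap_apply_right,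
      swap_apply_left, hp.extendedBoundary_y hf]
  by_cases hzy : z = y
  · rw [hzy, swap_apply_of_ne_of_ne hp.x_ne_y.symm hp.j_ne_y.symm,
      swap_apply_of_ne_of_ne hp.x_ne_y.symm hay.symm, swap_apply_right,
      hp.extendedBoundary_x_of_a_ne_y hf hay, boundary_apply, hp.τ_y]
  · rw [swap_apply_of_ne_of_ne hzx hzj, swap_apply_of_ne_of_ne hzx hza,
      swap_apply_of_ne_of_ne hzx hzy, hp.extendedBoundary_apply_of_ne hf hzx hza hzj hzy]

theorem boundary_eq_mul_swaps (hp : D.IsParallelPair i j x y c a)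
    (hf : IsRenumbering D j D' f) :
    D.boundary = hf.extendedBoundary * swap x y * swap x a * swap x j := by
  rcases eq_or_ne a y with hay | hay
  · rw [hay, mul_swap_mul_self]
    exact hp.boundary_eq_mul_swap_of_a_eq_y hf hay
  · exact hp.boundary_eq_mul_swaps_of_a_ne_y hf hay

theorem numOrbits_boundary_add_one (hp : D.IsParallelPair i j x y c a)
    (hf : IsRenumbering D j D' f) :
    D.boundary.numOrbits + 1 = hf.extendedBoundary.numOrbits := by
  have hfix : (hf.extendedBoundary * swap x y * swap x a) x = x := by
    rw [mul_apply, mul_apply, swap_apply_left, hp.extendedBoundary_swap_x_y_a hf]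
  have hmerge_y := numOrbits_mul_swap_add_one (hp.extendedBoundary_y hf) hp.x_ne_y
  have hsplit_x := numOrbits_mul_swap_add_one hfix hp.a_ne_x
  rw [swap_comm a x, mul_swap_mul_self] at hsplit_x
  have hmerge_x := numOrbits_mul_swap_add_one hfix hp.x_ne_j.symm
  rw [swap_comm j x, ← hp.boundary_eq_mul_swaps hf] at hmerge_x
  omega

end IsParallelPair

theorem StepBeta.F_add_one {n : ℕ} {D : ChordDiagram (n + 2)} {D' : ChordDiagram (n + 1)}
    (h : StepBeta D D') : D'.F + 1 = D.F := by
  obtain ⟨i, hpar, hne, f, hf⟩ := h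
  simp only [finRotate_apply] at hpar hne hf
  have hf : IsRenumbering D (i + 1) D' f := hf
  have hp : D.IsParallelPair i (i + 1) (D.τ i) (D.τ (i + 1)) (D.τ (i + 1) - 1)
      (D.τ (D.τ (i + 1) - 1)) :=
    ⟨rfl, rfl, rfl, rfl, by rw [hpar, ← finRotate_apply, apply_symm_apply], sub_add_cancel _ _,
      hne⟩
  have := hp.numOrbits_boundary_add_one hf
  rw [hf.numOrbits_extendedBoundary] at this
  rw [F_eq_numOrbits, F_eq_numOrbits]
  omega

end ChordDiagram

/-- If `D'` (of order `n + 1`) is obtained from a chord diagram `D` of order `n + 2 ≥ 2` by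
reduction operation (β) (deleting the chord `{i+1, τ(i+1)}` from a parallel pair, i.e. with
`τ(i+1) = τ(i) - 1` and the two chords distinct, and renumbering), then `F(D') = F(D) - 1`,
hence `(n + 1) + 1 - F(D') = (n + 2) + 1 - F(D)`; in particular operation (β) preserves
realizability on the torus. -/
theorem stepBeta_boundary_components (n : ℕ) (D : ChordDiagram (n + 2))
    (D' : ChordDiagram (n + 1)) (h : ChordDiagram.StepBeta D D') :
    D'.F + 1 = D.F ∧
    ((n : ℤ) + 1) + 1 - (D'.F : ℤ) = ((n : ℤ) + 2) + 1 - (D.F : ℤ) ∧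
    (((n : ℤ) + 2) + 1 - (D.F : ℤ) ≤ 2 ↔ ((n : ℤ) + 1) + 1 - (D'.F : ℤ) ≤ 2) := by
  have hF := h.F_add_one
  exact ⟨hF, by omega, by omega⟩
end
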